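/- arXiv:1111.0576 — 4 statements merged into one kernel-verified Lean document; each statement's English description precedes it below -/
import Mathlib

section
/- (Bahadur representation) Let π be a probability distribution on {0,1}^d with mean vector m ∈ (0,1)^d. Then for every γ ∈ {0,1}^d, π(γ) = q^⊓_m(γ) · ∑_{I ⊆ {1,…,d}} c_I^π u_I^π(γ), where q^⊓_m is the product (independent Bernoulli) distribution with means m, u_I^π(γ) := ∏_{i∈I} (γ_i − m_i)/√(m_i(1−m_i)), and c_I^π := E_π[u_I^π(Γ)]. -/
open Finset

/-!
The functions `u_I` are products of the standardized coordinates
`xᵢ(γ) = (γᵢ - mᵢ)/√(mᵢ(1 - mᵢ))`, which have mean `0` and variance `1` under the Bernoulli(`mᵢ`)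
law; so the `u_I` form an orthonormal basis of `L²(q)` for the product law `q`. Concretely, the
reproducing kernel `∑_I u_I(δ) u_I(γ) = ∏ᵢ (xᵢ(δ) xᵢ(γ) + 1)` equals `1 / q(γ)` if `δ = γ` and `0` otherwise, and
expanding any function `π` against it gives `π(γ) = q(γ) ∑_I ⟨π, u_I⟩ u_I(γ)`.
-/

noncomputable section

namespace Bahadur

def bernoulliWeight (p : ℝ) (b : Bool) : ℝ := if b then p else 1 - p

def standardized (p : ℝ) (b : Bool) : ℝ :=
  ((if b then (1 : ℝ) else 0) - p) / Real.sqrt (p * (1 - p))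

theorem bernoulliWeight_pos {p : ℝ} (hp0 : 0 < p) (hp1 : p < 1) (b : Bool) :
    0 < bernoulliWeight p b := by
  cases b <;> simp only [bernoulliWeight] <;> grind

theorem standardized_mul_standardized_add_one {p : ℝ} (hp0 : 0 < p) (hp1 : p < 1)
    (a b : Bool) :
    standardized p a * standardized p b + 1 =
      if a = b then (bernoulliWeight p b)⁻¹ else 0 := by
  have hvar : Real.sqrt (p * (1 - p)) ^ 2 = p * (1 - p) :=
    Real.sq_sqrt (by nlinarith)
  have hp1' : 1 - p ≠ 0 := by linarith
  simp only [standardized, div_mul_div_comm, ← sq, hvar]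
  cases a <;> cases b <;>
    simp only [bernoulliWeight, Bool.false_eq_true, Bool.true_eq_false, ↓reduceIte, zero_sub,
      mul_neg, neg_mul, neg_neg] <;>
    field_simp <;> ring

variable {ι : Type*} [Fintype ι]

theorem sum_prod_standardized_mul_prod_standardized {m : ι → ℝ} (hm0 : ∀ i, 0 < m i)
    (hm1 : ∀ i, m i < 1) (δ γ : ι → Bool) :
    ∑ I : Finset ι, (∏ i ∈ I, standardized (m i) (δ i)) * ∏ i ∈ I, standardized (m i) (γ i) =
      if δ = γ then (∏ i, bernoulliWeight (m i) (γ i))⁻¹ else 0 := by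
  have hkernel : ∑ I : Finset ι,
      (∏ i ∈ I, standardized (m i) (δ i)) * ∏ i ∈ I, standardized (m i) (γ i) =
        ∏ i, (standardized (m i) (δ i) * standardized (m i) (γ i) + 1) := by
    simp only [prod_add_one, powerset_univ, prod_mul_distrib]
  rw [hkernel]
  simp only [standardized_mul_standardized_add_one (hm0 _) (hm1 _)]
  split_ifs with hδγ
  · simp [hδγ, prod_inv_distrib]
  · obtain ⟨i, hi⟩ := Function.ne_iff.mp hδγ
    exact prod_eq_zero (mem_univ i) (if_neg hi)

theorem eq_prod_bernoulliWeight_mul_sum [DecidableEq ι] {m : ι → ℝ} (hm0 : ∀ i, 0 < m i)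
    (hm1 : ∀ i, m i < 1) (π : (ι → Bool) → ℝ) (γ : ι → Bool) :
    π γ = (∏ i, bernoulliWeight (m i) (γ i)) *
      ∑ I : Finset ι, (∑ δ, π δ * ∏ i ∈ I, standardized (m i) (δ i)) *
        ∏ i ∈ I, standardized (m i) (γ i) := by
  have hq : (∏ i, bernoulliWeight (m i) (γ i)) ≠ 0 :=
    (prod_pos fun i _ => bernoulliWeight_pos (hm0 i) (hm1 i) (γ i)).ne'
  simp only [sum_mul, mul_assoc]
  rw [sum_comm]
  simp only [← mul_sum, sum_prod_standardized_mul_prod_standardized hm0 hm1, mul_ite, mul_zero,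
    sum_ite_eq', mem_univ, if_true]
  field_simp

end Bahadur

open Bahadur in
theorem stmt_4_general (d : ℕ) (π : (Fin d → Bool) → ℝ)
    (m : Fin d → ℝ) (h0 : ∀ i, 0 < m i) (h1 : ∀ i, m i < 1)
    (q : (Fin d → Bool) → ℝ)
    (hq : ∀ γ, q γ = ∏ i : Fin d, (if γ i then m i else 1 - m i))
    (u : Finset (Fin d) → (Fin d → Bool) → ℝ)
    (hu : ∀ I γ, u I γ =
      ∏ i ∈ I, ((if γ i then (1:ℝ) else 0) - m i) / Real.sqrt (m i * (1 - m i)))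
    (c : Finset (Fin d) → ℝ)
    (hc : ∀ I, c I = ∑ γ : Fin d → Bool, π γ * u I γ) :
    ∀ γ : Fin d → Bool, π γ = q γ * ∑ I : Finset (Fin d), c I * u I γ := by
  obtain rfl : c = fun I => ∑ γ, π γ * u I γ := funext hc
  obtain rfl : u = fun I γ => ∏ i ∈ I, standardized (m i) (γ i) := funext₂ hu
  obtain rfl : q = fun γ => ∏ i, bernoulliWeight (m i) (γ i) := funext hq
  exact eq_prod_bernoulliWeight_mul_sum h0 h1 π

/-- Bahadur representation of a binary distribution. -/
theorem stmt_4 (d : ℕ) (π : (Fin d → Bool) → ℝ)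
    (hπ : ∀ γ, 0 ≤ π γ) (hsum : ∑ γ : Fin d → Bool, π γ = 1)
    (m : Fin d → ℝ) (h0 : ∀ i, 0 < m i) (h1 : ∀ i, m i < 1)
    (hmean : ∀ i, ∑ γ : Fin d → Bool, π γ * (if γ i then (1:ℝ) else 0) = m i)
    (q : (Fin d → Bool) → ℝ)
    (hq : ∀ γ, q γ = ∏ i : Fin d, (if γ i then m i else 1 - m i))
    (u : Finset (Fin d) → (Fin d → Bool) → ℝ)
    (hu : ∀ I γ, u I γ =
      ∏ i ∈ I, ((if γ i then (1:ℝ) else 0) - m i) / Real.sqrt (m i * (1 - m i)))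
    (c : Finset (Fin d) → ℝ)
    (hc : ∀ I, c I = ∑ γ : Fin d → Bool, π γ * u I γ) :
    ∀ γ : Fin d → Bool, π γ = q γ * ∑ I : Finset (Fin d), c I * u I γ :=
  stmt_4_general d π m h0 h1 q hq u hu c hc
end
end

section
/- For all p ≥ 1 and all x ∈ (0,1), x^{p−1} + (1−x)^{p−1} ≤ 2^{2−min{p,2}}. -/
/-- For p ≥ 1 and x ∈ (0,1): x^(p−1) + (1−x)^(p−1) ≤ 2^(2−min{p,2}). -/
theorem stmt_8 (p x : ℝ) (hp : 1 ≤ p) (hx0 : 0 < x) (hx1 : x < 1) :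
    x ^ (p - 1) + (1 - x) ^ (p - 1) ≤ (2:ℝ) ^ (2 - min p 2) := by
  rcases le_total p 2 with h2 | h2
  · rw [min_eq_left h2]
    have hc := (Real.concaveOn_rpow (p := p - 1) (by linarith) (by linarith)).2
      (Set.mem_Ici.mpr hx0.le) (Set.mem_Ici.mpr (by linarith : (0:ℝ) ≤ 1 - x))
      (by norm_num : (0:ℝ) ≤ 1/2) (by norm_num : (0:ℝ) ≤ 1/2) (by norm_num)
    simp only [smul_eq_mul] at hc
    rw [show (1/2 : ℝ) * x + 1/2 * (1 - x) = 1/2 by ring] at hc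
    have h12 : ((1:ℝ)/2) ^ (p - 1) = 2 ^ (1 - p) := by
      rw [one_div, ← Real.rpow_neg_one 2, ← Real.rpow_mul (by norm_num)]
      ring_nf
    have : x ^ (p - 1) + (1 - x) ^ (p - 1) ≤ 2 * (2:ℝ) ^ (1 - p) := by
      rw [← h12]; linarith
    calc x ^ (p - 1) + (1 - x) ^ (p - 1) ≤ 2 * (2:ℝ) ^ (1 - p) := this
      _ = (2:ℝ) ^ (2 - p) := by
          rw [show (2 - p : ℝ) = 1 + (1 - p) by ring, Real.rpow_add (by norm_num),
            Real.rpow_one]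
  · rw [min_eq_right h2]
    have ha : x ^ (p - 1) ≤ x := by
      nth_rewrite 2 [← Real.rpow_one x]
      exact Real.rpow_le_rpow_of_exponent_ge hx0 hx1.le (by linarith)
    have hb : (1 - x) ^ (p - 1) ≤ 1 - x := by
      nth_rewrite 2 [← Real.rpow_one (1 - x)]
      exact Real.rpow_le_rpow_of_exponent_ge (by linarith) (by linarith) (by linarith)
    have : (2:ℝ) ^ (2 - (2:ℝ)) = 1 := by norm_num
    rw [this]; linarith
end

section
/- Let π be a distribution on {0,1}^d with augmented second-moment matrix [[M, m],[mᵀ,1]] positive definite, and let μ: ℝ → (0,1) be strictly monotonic and differentiable with μ' > 0. Then for every a ∈ ℝ^{d+1}, the Jacobian determinant of f(a) = ∑_{γ∈{0,1}^d} π(γ) μ(a_{d+1} + ∑_{k=1}^d a_k γ_k) (γᵀ, 1)ᵀ is strictly positive; in particular, f is locally injective everywhere. -/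
/-!
The Jacobian `f'(a) = ∑ π γ μ'(⟪a, γ̂⟫) γ̂ γ̂ᵀ` (with `γ̂ = (γ, 1)`) has the same weighted
rank-one terms as the positive definite augmented moment matrix `∑ π γ γ̂ γ̂ᵀ`, only with
other positive weights on the support of `π`; the quadratic form `∑ w γ ⟪γ̂, x⟫²` of either
vanishes exactly when `⟪γ̂, x⟫ = 0` on that support, so the Jacobian is positive definite.
The same support argument gives global injectivity: for `u ≠ v`,
`⟪u - v, f u - f v⟫ = ∑ π γ (μ s_u - μ s_v)(s_u - s_v)` with `s_w = ⟪w, γ̂⟫` is a sum of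
nonnegative terms, one of them positive, since `μ` is strictly increasing.
-/

open Finset Matrix

theorem StrictMono.sub_mul_sub_pos {μ : ℝ → ℝ} (hμ : StrictMono μ) {s t : ℝ} (hst : s ≠ t) :
    0 < (μ s - μ t) * (s - t) := by
  rcases hst.lt_or_gt with hlt | hlt
  · exact mul_pos_of_neg_of_neg (sub_neg.2 (hμ hlt)) (sub_neg.2 hlt)
  · exact mul_pos (sub_pos.2 (hμ hlt)) (sub_pos.2 hlt)

theorem StrictMono.sub_mul_sub_nonneg {μ : ℝ → ℝ} (hμ : StrictMono μ) (s t : ℝ) :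
    0 ≤ (μ s - μ t) * (s - t) := by
  rcases eq_or_ne s t with rfl | hst
  · simp
  · exact (hμ.sub_mul_sub_pos hst).le

namespace Matrix

variable {ι n : Type*} [Fintype ι] [Fintype n] {c : ι → ℝ} {e : ι → n → ℝ}

theorem dotProduct_sum_smul_vecMulVec_mulVec (c : ι → ℝ) (e : ι → n → ℝ) (x : n → ℝ) :
    x ⬝ᵥ ((∑ γ, c γ • vecMulVec (e γ) (e γ)) *ᵥ x) = ∑ γ, c γ * (e γ ⬝ᵥ x) ^ 2 := by
  simp only [sum_mulVec, smul_mulVec, vecMulVec_mulVec, dotProduct_sum, dotProduct_smul,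
    op_smul_eq_smul, smul_eq_mul, dotProduct_comm x (e _)]
  exact sum_congr rfl fun γ _ => by ring

theorem exists_pos_and_dotProduct_ne_zero_of_posDef (hc : ∀ γ, 0 ≤ c γ)
    (hA : (∑ γ, c γ • vecMulVec (e γ) (e γ)).PosDef) {x : n → ℝ} (hx : x ≠ 0) :
    ∃ γ, 0 < c γ ∧ e γ ⬝ᵥ x ≠ 0 := by
  have hquad := hA.dotProduct_mulVec_pos hx
  rw [star_trivial, dotProduct_sum_smul_vecMulVec_mulVec] at hquad
  obtain ⟨γ, -, hγ⟩ := exists_ne_zero_of_sum_ne_zero hquad.ne'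
  obtain ⟨hcγ, hdot⟩ := mul_ne_zero_iff.1 hγ
  exact ⟨γ, (hc γ).lt_of_ne' hcγ, pow_ne_zero_iff two_ne_zero |>.1 hdot⟩

theorem posDef_sum_smul_vecMulVec_of_pos_imp_pos {c' : ι → ℝ} (hc : ∀ γ, 0 ≤ c γ)
    (hA : (∑ γ, c γ • vecMulVec (e γ) (e γ)).PosDef) (hc' : ∀ γ, 0 ≤ c' γ)
    (hcc' : ∀ γ, 0 < c γ → 0 < c' γ) :
    (∑ γ, c' γ • vecMulVec (e γ) (e γ)).PosDef := by
  have hherm : (∑ γ, c' γ • vecMulVec (e γ) (e γ)).IsHermitian :=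
    (posSemidef_sum _ fun γ _ => by
      simpa using (posSemidef_vecMulVec_self_star (e γ)).smul (hc' γ)).isHermitian
  refine .of_dotProduct_mulVec_pos hherm fun x hx => ?_
  rw [star_trivial, dotProduct_sum_smul_vecMulVec_mulVec]
  obtain ⟨γ₀, hcγ₀, hdot⟩ := exists_pos_and_dotProduct_ne_zero_of_posDef hc hA hx
  exact sum_pos' (fun γ _ => mul_nonneg (hc' γ) (sq_nonneg _))
    ⟨γ₀, mem_univ _, mul_pos (hcc' γ₀ hcγ₀) (sq_pos_of_ne_zero hdot)⟩

theorem sub_dotProduct_sum_smul_sub (c : ι → ℝ) (e : ι → n → ℝ) (μ : ℝ → ℝ) (u v : n → ℝ) :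
    (u - v) ⬝ᵥ (∑ γ, c γ • μ (u ⬝ᵥ e γ) • e γ - ∑ γ, c γ • μ (v ⬝ᵥ e γ) • e γ)
      = ∑ γ, c γ * ((μ (u ⬝ᵥ e γ) - μ (v ⬝ᵥ e γ)) * (u ⬝ᵥ e γ - v ⬝ᵥ e γ)) := by
  simp only [← sum_sub_distrib, dotProduct_sum, dotProduct_sub, dotProduct_smul, smul_eq_mul,
    dotProduct_comm _ (e _)]
  exact sum_congr rfl fun γ _ => by ring

theorem injective_sum_smul_smul_of_strictMono {μ : ℝ → ℝ} (hμ : StrictMono μ)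
    (hc : ∀ γ, 0 ≤ c γ) (hA : (∑ γ, c γ • vecMulVec (e γ) (e γ)).PosDef) :
    Function.Injective fun a : n → ℝ => ∑ γ, c γ • μ (a ⬝ᵥ e γ) • e γ := by
  intro u v huv
  by_contra hne
  obtain ⟨γ₀, hcγ₀, hdot⟩ :=
    exists_pos_and_dotProduct_ne_zero_of_posDef hc hA (sub_ne_zero.2 hne)
  have hpos : 0 < (u - v) ⬝ᵥ (∑ γ, c γ • μ (u ⬝ᵥ e γ) • e γ - ∑ γ, c γ • μ (v ⬝ᵥ e γ) • e γ) := by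
    rw [sub_dotProduct_sum_smul_sub]
    refine sum_pos' (fun γ _ => mul_nonneg (hc γ) (hμ.sub_mul_sub_nonneg _ _))
      ⟨γ₀, mem_univ _, mul_pos hcγ₀ (hμ.sub_mul_sub_pos ?_)⟩
    rwa [dotProduct_comm, sub_dotProduct, sub_ne_zero] at hdot
  simp only at huv
  rw [huv, sub_self, dotProduct_zero] at hpos
  exact hpos.false

end Matrix

theorem stmt_12_general (d : ℕ) (π : (Fin d → Bool) → ℝ)
    (hπ : ∀ γ, 0 ≤ π γ)
    (ext : (Fin d → Bool) → Fin (d + 1) → ℝ)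
    (hpos : (∑ γ : Fin d → Bool, π γ • vecMulVec (ext γ) (ext γ)).PosDef)
    (μ : ℝ → ℝ) (hμmono : StrictMono μ)
    (hμ' : ∀ x, 0 < deriv μ x)
    (f : (Fin (d + 1) → ℝ) → Fin (d + 1) → ℝ)
    (hf : ∀ a, f a = ∑ γ : Fin d → Bool,
      π γ • (μ (∑ i : Fin (d + 1), a i * ext γ i) • ext γ)) :
    (∀ a : Fin (d + 1) → ℝ,
      0 < (∑ γ : Fin d → Bool,
            (π γ * deriv μ (∑ i : Fin (d + 1), a i * ext γ i))
              • vecMulVec (ext γ) (ext γ)).det) ∧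
    (∀ a : Fin (d + 1) → ℝ, ∃ U ∈ nhds a, Set.InjOn f U) := by
  refine ⟨fun a => ?_, fun a => ?_⟩
  · exact (posDef_sum_smul_vecMulVec_of_pos_imp_pos hπ hpos
      (fun γ => mul_nonneg (hπ γ) (hμ' _).le) (fun γ hγ => mul_pos hγ (hμ' _))).det_pos
  · have hinj : Function.Injective f := by
      rw [funext hf]
      exact injective_sum_smul_smul_of_strictMono hμmono hπ hpos
    exact ⟨Set.univ, Filter.univ_mem, hinj.injOn⟩

/-- The Jacobian determinant of the moment map of a μ-conditionals extension is
strictly positive; in particular f is locally injective everywhere. -/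
theorem stmt_12 (d : ℕ) (π : (Fin d → Bool) → ℝ)
    (hπ : ∀ γ, 0 ≤ π γ) (hπsum : ∑ γ : Fin d → Bool, π γ = 1)
    (ext : (Fin d → Bool) → Fin (d + 1) → ℝ)
    (hext : ∀ γ, ext γ = Fin.snoc (fun i => if γ i then (1:ℝ) else 0) 1)
    (hpos : (∑ γ : Fin d → Bool, π γ • vecMulVec (ext γ) (ext γ)).PosDef)
    (μ : ℝ → ℝ) (hμmono : StrictMono μ) (hμdiff : Differentiable ℝ μ)
    (hμ' : ∀ x, 0 < deriv μ x)
    (f : (Fin (d + 1) → ℝ) → Fin (d + 1) → ℝ)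
    (hf : ∀ a, f a = ∑ γ : Fin d → Bool,
      π γ • (μ (∑ i : Fin (d + 1), a i * ext γ i) • ext γ)) :
    (∀ a : Fin (d + 1) → ℝ,
      0 < (∑ γ : Fin d → Bool,
            (π γ * deriv μ (∑ i : Fin (d + 1), a i * ext γ i))
              • vecMulVec (ext γ) (ext γ)).det) ∧
    (∀ a : Fin (d + 1) → ℝ, ∃ U ∈ nhds a, Set.InjOn f U) :=
  stmt_12_general d π hπ ext hpos μ hμmono hμ' f hf
end

section
/- (Total variation bound on Metropolis–Hastings cross-covariance) Let π and q be distributions on {0,1}^d with the same mean m ∈ (0,1)^d, let κ(γ|x) be the Metropolis–Hastings kernel with independent proposal q and target π, and let X ∼ π, Γ ∼ κ(·|X). Then E[ΓXᵀ] − m mᵀ = ½(M^π − M^q) + R^κ, where M^π and M^q are the cross-moment matrices of π and q, and each entry of R^κ is bounded in absolute value by ∑_{γ∈{0,1}^d} |π(γ) − q(γ)|. -/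
open Finset

theorem mh_aux {α : Type*} [Fintype α] [DecidableEq α]
    (π q : α → ℝ)
    (hπpos : ∀ γ, 0 < π γ) (hπsum : ∑ γ : α, π γ = 1)
    (hqpos : ∀ γ, 0 < q γ) (hqsum : ∑ γ : α, q γ = 1)
    (f g : α → ℝ)
    (hf01 : ∀ x, f x = 0 ∨ f x = 1) (hg01 : ∀ x, g x = 0 ∨ g x = 1)
    (mi mj : ℝ)
    (hπf : ∑ γ : α, π γ * f γ = mi) (hqf : ∑ γ : α, q γ * f γ = mi)
    (hπg : ∑ γ : α, π γ * g γ = mj) (hqg : ∑ γ : α, q γ * g γ = mj)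
    (lam κ : α → α → ℝ)
    (hlam : ∀ γ x, lam γ x = min 1 ((π γ * q x) / (π x * q γ)))
    (hκ : ∀ γ x, κ γ x = q γ * lam γ x +
      (if γ = x then 1 - ∑ y : α, q y * lam y x else 0)) :
    |(∑ x : α, ∑ γ : α, f γ * g x * κ γ x * π x) - mi * mj
      - ((∑ γ : α, π γ * f γ * g γ) - (∑ γ : α, q γ * f γ * g γ)) / 2|
      ≤ ∑ γ : α, |π γ - q γ| := by
  classical
  set D : α → α → ℝ := fun γ x => |q γ * π x - q x * π γ| with hD
  have hπf' : ∑ γ : α, f γ * π γ = mi := by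
    rw [← hπf]; exact Finset.sum_congr rfl fun _ _ => mul_comm _ _
  have hqf' : ∑ γ : α, f γ * q γ = mi := by
    rw [← hqf]; exact Finset.sum_congr rfl fun _ _ => mul_comm _ _
  have hπg' : ∑ γ : α, g γ * π γ = mj := by
    rw [← hπg]; exact Finset.sum_congr rfl fun _ _ => mul_comm _ _
  have hqg' : ∑ γ : α, g γ * q γ = mj := by
    rw [← hqg]; exact Finset.sum_congr rfl fun _ _ => mul_comm _ _
  -- key identity for the acceptance ratio
  have hA : ∀ γ x, q γ * lam γ x * π x = (q γ * π x + q x * π γ - D γ x) / 2 := by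
    intro γ x
    have hπx : π x ≠ 0 := (hπpos x).ne'
    have hqγ : q γ ≠ 0 := (hqpos γ).ne'
    have hpos : (0:ℝ) < π x * q γ := mul_pos (hπpos x) (hqpos γ)
    rw [hlam]
    rcases le_total (π γ * q x) (π x * q γ) with h | h
    · rw [min_eq_right (by rw [div_le_one hpos]; exact h)]
      have habs : D γ x = q γ * π x - q x * π γ := by
        simp only [hD]
        rw [abs_of_nonneg]; nlinarith [h]
      rw [habs]
      field_simp
      ring
    · rw [min_eq_left (by rw [le_div_iff₀ hpos]; nlinarith)]
      have habs : D γ x = q x * π γ - q γ * π x := by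
        simp only [hD]
        rw [abs_of_nonpos (by nlinarith), neg_sub]
      rw [habs]; ring
  -- decompose the expectation
  have hE : (∑ x : α, ∑ γ : α, f γ * g x * κ γ x * π x)
      = (∑ x : α, ∑ γ : α, f γ * g x * ((q γ * π x + q x * π γ - D γ x) / 2))
        + ∑ x : α, f x * g x * (π x - ∑ y : α, (q y * π x + q x * π y - D y x) / 2) := by
    rw [← Finset.sum_add_distrib]
    refine Finset.sum_congr rfl fun x _ => ?_
    have hpt : ∀ γ, f γ * g x * κ γ x * π x
        = f γ * g x * ((q γ * π x + q x * π γ - D γ x) / 2)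
          + (if γ = x then f x * g x *
              (π x - ∑ y : α, (q y * π x + q x * π y - D y x) / 2) else 0) := by
      intro γ
      rw [hκ]
      rcases eq_or_ne γ x with rfl | hne
      · rw [if_pos rfl, if_pos rfl]
        have h1 : (∑ y : α, q y * lam y γ) * π γ
            = ∑ y : α, (q y * π γ + q γ * π y - D y γ) / 2 := by
          rw [Finset.sum_mul]
          exact Finset.sum_congr rfl fun y _ => hA y γ
        have h2 := hA γ γ
        calc f γ * g γ * (q γ * lam γ γ + (1 - ∑ y : α, q y * lam y γ)) * π γ
            = f γ * g γ * (q γ * lam γ γ * π γ)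
              + f γ * g γ * (π γ - (∑ y : α, q y * lam y γ) * π γ) := by ring
          _ = f γ * g γ * ((q γ * π γ + q γ * π γ - D γ γ) / 2)
              + f γ * g γ * (π γ - ∑ y : α, (q y * π γ + q γ * π y - D y γ) / 2) := by
              rw [h2, h1]
      · rw [if_neg hne, if_neg hne, add_zero, add_zero]
        calc f γ * g x * (q γ * lam γ x) * π x
            = f γ * g x * (q γ * lam γ x * π x) := by ring
          _ = f γ * g x * ((q γ * π x + q x * π γ - D γ x) / 2) := by rw [hA]
    rw [Finset.sum_congr rfl fun γ _ => hpt γ, Finset.sum_add_distrib,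
      Finset.sum_ite_eq' Finset.univ x]
    simp
  -- evaluate the first double sum
  have e1 : ∑ x : α, ∑ γ : α, f γ * g x * (q γ * π x) = mi * mj := by
    have h : ∀ x, ∑ γ : α, f γ * g x * (q γ * π x) = mi * (g x * π x) := by
      intro x
      rw [show mi * (g x * π x) = (∑ γ : α, f γ * q γ) * (g x * π x) from by rw [hqf'],
        Finset.sum_mul]
      exact Finset.sum_congr rfl fun γ _ => by ring
    rw [Finset.sum_congr rfl fun x _ => h x, ← Finset.mul_sum, hπg']
  have e2 : ∑ x : α, ∑ γ : α, f γ * g x * (q x * π γ) = mi * mj := by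
    have h : ∀ x, ∑ γ : α, f γ * g x * (q x * π γ) = mi * (g x * q x) := by
      intro x
      rw [show mi * (g x * q x) = (∑ γ : α, f γ * π γ) * (g x * q x) from by rw [hπf'],
        Finset.sum_mul]
      exact Finset.sum_congr rfl fun γ _ => by ring
    rw [Finset.sum_congr rfl fun x _ => h x, ← Finset.mul_sum, hqg']
  -- first piece
  have P1 : (∑ x : α, ∑ γ : α, f γ * g x * ((q γ * π x + q x * π γ - D γ x) / 2))
      = mi * mj - (∑ x : α, ∑ γ : α, f γ * g x * D γ x) / 2 := by
    have h : ∀ x, ∑ γ : α, f γ * g x * ((q γ * π x + q x * π γ - D γ x) / 2)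
        = ((∑ γ : α, f γ * g x * (q γ * π x)) + (∑ γ : α, f γ * g x * (q x * π γ))
            - ∑ γ : α, f γ * g x * D γ x) / 2 := by
      intro x
      rw [← Finset.sum_add_distrib, ← Finset.sum_sub_distrib, Finset.sum_div]
      exact Finset.sum_congr rfl fun γ _ => by ring
    have h2 : (∑ x : α, ((∑ γ : α, f γ * g x * (q γ * π x))
            + (∑ γ : α, f γ * g x * (q x * π γ))
            - ∑ γ : α, f γ * g x * D γ x) / 2)
        = ((∑ x : α, ∑ γ : α, f γ * g x * (q γ * π x))
            + (∑ x : α, ∑ γ : α, f γ * g x * (q x * π γ))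
            - ∑ x : α, ∑ γ : α, f γ * g x * D γ x) / 2 := by
      rw [← Finset.sum_add_distrib, ← Finset.sum_sub_distrib, Finset.sum_div]
    rw [Finset.sum_congr rfl fun x _ => h x, h2, e1, e2]
    ring
  -- inner normalization for the diagonal piece
  have hin : ∀ x, ∑ y : α, (q y * π x + q x * π y - D y x) / 2
      = (π x + q x - ∑ y : α, D y x) / 2 := by
    intro x
    rw [← Finset.sum_div]
    congr 1
    rw [Finset.sum_sub_distrib, Finset.sum_add_distrib, ← Finset.sum_mul, hqsum,
      ← Finset.mul_sum, hπsum]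
    ring
  -- second piece
  have P2 : (∑ x : α, f x * g x * (π x - ∑ y : α, (q y * π x + q x * π y - D y x) / 2))
      = ((∑ γ : α, π γ * f γ * g γ) - (∑ γ : α, q γ * f γ * g γ)) / 2
        + (∑ x : α, ∑ γ : α, f x * g x * D γ x) / 2 := by
    have h : ∀ x, f x * g x * (π x - ∑ y : α, (q y * π x + q x * π y - D y x) / 2)
        = (π x * f x * g x - q x * f x * g x) / 2 + (∑ γ : α, f x * g x * D γ x) / 2 := by
      intro x
      rw [hin x, ← Finset.mul_sum]
      ring
    rw [Finset.sum_congr rfl fun x _ => h x, Finset.sum_add_distrib, ← Finset.sum_div,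
      ← Finset.sum_div, ← Finset.sum_sub_distrib]
  -- master identity
  have hkey : (∑ x : α, ∑ γ : α, f γ * g x * κ γ x * π x) - mi * mj
      - ((∑ γ : α, π γ * f γ * g γ) - (∑ γ : α, q γ * f γ * g γ)) / 2
      = (∑ x : α, ∑ γ : α, (f x - f γ) * g x * D γ x) / 2 := by
    rw [hE, P1, P2]
    have h3 : ∑ x : α, ∑ γ : α, (f x - f γ) * g x * D γ x
        = (∑ x : α, ∑ γ : α, f x * g x * D γ x)
          - ∑ x : α, ∑ γ : α, f γ * g x * D γ x := by
      rw [← Finset.sum_sub_distrib]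
      refine Finset.sum_congr rfl fun x _ => ?_
      rw [← Finset.sum_sub_distrib]
      exact Finset.sum_congr rfl fun γ _ => by ring
    rw [h3]; ring
  rw [hkey]
  -- bound the remainder
  have hb1 : ∀ γ x : α, |(f x - f γ) * g x * D γ x| ≤ D γ x := by
    intro γ x
    have hDnn : 0 ≤ D γ x := abs_nonneg _
    have hfd : |f x - f γ| ≤ 1 := by
      rcases hf01 x with h1 | h1 <;> rcases hf01 γ with h2 | h2 <;>
        rw [h1, h2] <;> norm_num
    have hgb : |g x| ≤ 1 := by rcases hg01 x with h | h <;> rw [h] <;> norm_num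
    calc |(f x - f γ) * g x * D γ x| = |f x - f γ| * |g x| * |D γ x| := by
          rw [abs_mul, abs_mul]
      _ ≤ 1 * 1 * D γ x := by
          rw [abs_of_nonneg hDnn]
          gcongr
      _ = D γ x := by ring
  have hb2 : ∀ γ x : α, D γ x ≤ q γ * |π x - q x| + q x * |π γ - q γ| := by
    intro γ x
    have hsplit : q γ * π x - q x * π γ = q γ * (π x - q x) - q x * (π γ - q γ) := by ring
    simp only [hD]
    rw [hsplit]
    calc |q γ * (π x - q x) - q x * (π γ - q γ)|
        ≤ |q γ * (π x - q x)| + |q x * (π γ - q γ)| := abs_sub _ _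
      _ = q γ * |π x - q x| + q x * |π γ - q γ| := by
          rw [abs_mul, abs_mul, abs_of_pos (hqpos γ), abs_of_pos (hqpos x)]
  have hDsum : ∑ x : α, ∑ γ : α, D γ x ≤ 2 * ∑ γ : α, |π γ - q γ| := by
    have hrow : ∀ x, ∑ γ : α, (q γ * |π x - q x| + q x * |π γ - q γ|)
        = |π x - q x| + q x * ∑ γ : α, |π γ - q γ| := by
      intro x
      rw [Finset.sum_add_distrib, ← Finset.sum_mul, hqsum, one_mul, ← Finset.mul_sum]
    calc ∑ x : α, ∑ γ : α, D γ x
        ≤ ∑ x : α, ∑ γ : α, (q γ * |π x - q x| + q x * |π γ - q γ|) :=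
          Finset.sum_le_sum fun x _ => Finset.sum_le_sum fun γ _ => hb2 γ x
      _ = ∑ x : α, (|π x - q x| + q x * ∑ γ : α, |π γ - q γ|) :=
          Finset.sum_congr rfl fun x _ => hrow x
      _ = (∑ x : α, |π x - q x|) + (∑ x : α, q x) * ∑ γ : α, |π γ - q γ| := by
          rw [Finset.sum_add_distrib, ← Finset.sum_mul]
      _ = 2 * ∑ γ : α, |π γ - q γ| := by rw [hqsum]; ring
  have habs : |∑ x : α, ∑ γ : α, (f x - f γ) * g x * D γ x| ≤ ∑ x : α, ∑ γ : α, D γ x :=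
    (Finset.abs_sum_le_sum_abs _ _).trans
      (Finset.sum_le_sum fun x _ => (Finset.abs_sum_le_sum_abs _ _).trans
        (Finset.sum_le_sum fun γ _ => hb1 γ x))
  rw [abs_div]
  have h2 : |(2:ℝ)| = 2 := by norm_num
  rw [h2]
  linarith

/-- Auto-covariance of the independent Metropolis–Hastings kernel: the
cross-covariance equals ½(M^π − M^q) up to a remainder bounded entrywise by the
total variation distance (times two in the L¹ convention). -/
theorem stmt_19 (d : ℕ) (π q : (Fin d → Bool) → ℝ)
    (hπpos : ∀ γ, 0 < π γ) (hπsum : ∑ γ : Fin d → Bool, π γ = 1)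
    (hqpos : ∀ γ, 0 < q γ) (hqsum : ∑ γ : Fin d → Bool, q γ = 1)
    (m : Fin d → ℝ)
    (hmπ : ∀ i, ∑ γ : Fin d → Bool, π γ * (if γ i then (1:ℝ) else 0) = m i)
    (hmq : ∀ i, ∑ γ : Fin d → Bool, q γ * (if γ i then (1:ℝ) else 0) = m i)
    (lam : (Fin d → Bool) → (Fin d → Bool) → ℝ)
    (hlam : ∀ γ x, lam γ x = min 1 ((π γ * q x) / (π x * q γ)))
    (κ : (Fin d → Bool) → (Fin d → Bool) → ℝ)
    (hκ : ∀ γ x, κ γ x = q γ * lam γ x +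
      (if γ = x then 1 - ∑ y : Fin d → Bool, q y * lam y x else 0)) :
    ∀ i j : Fin d,
      |(∑ x : Fin d → Bool, ∑ γ : Fin d → Bool,
          (if γ i then (1:ℝ) else 0) * (if x j then (1:ℝ) else 0) * κ γ x * π x)
        - m i * m j
        - ((∑ γ : Fin d → Bool,
              π γ * (if γ i then (1:ℝ) else 0) * (if γ j then (1:ℝ) else 0))
            - (∑ γ : Fin d → Bool,
              q γ * (if γ i then (1:ℝ) else 0) * (if γ j then (1:ℝ) else 0))) / 2|
      ≤ ∑ γ : Fin d → Bool, |π γ - q γ| := by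
  intro i j
  exact mh_aux π q hπpos hπsum hqpos hqsum
    (fun γ => if γ i then (1:ℝ) else 0) (fun γ => if γ j then (1:ℝ) else 0)
    (fun γ => by by_cases h : γ i <;> simp [h])
    (fun γ => by by_cases h : γ j <;> simp [h])
    (m i) (m j) (hmπ i) (hmq i) (hmπ j) (hmq j) lam κ hlam hκ
end
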